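/- arXiv:2112.08792 — 3 statements merged into one kernel-verified Lean document; each statement's English description precedes it below -/
import Mathlib

section
/- Convolution estimate. Fix ε > 0 and let Ξ := {ξ ∈ ℂ : dist(ξ, [0,∞)) < ε}. Let m ≥ 1, let i₁,…,i_m be nonnegative integers, and set n := i₁ + ⋯ + i_m. Let f_{i₁},…,f_{i_m} be holomorphic functions on Ξ and suppose there are constants M_{i₁},…,M_{i_m}, L ≥ 0 such that |f_{i_k}(ξ)| ≤ M_{i_k}·|ξ|^{i_k}/(i_k)!·e^{L|ξ|} for all ξ ∈ Ξ and each k = 1,…,m. Then the m-fold convolution satisfies |(f_{i₁} ∗ ⋯ ∗ f_{i_m})(ξ)| ≤ M_{i₁}⋯M_{i_m}·|ξ|^{n+m−1}/(n+m−1)!·e^{L|ξ|} for all ξ ∈ Ξ. -/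
open MeasureTheory

noncomputable section

/-- The `ε`-neighbourhood of the positive real axis in the Borel plane. -/
def Xi (ε : ℝ) : Set ℂ :=
  {ξ : ℂ | ∃ t : ℝ, 0 ≤ t ∧ dist ξ (t : ℂ) < ε}

/-- Convolution of two holomorphic functions along the straight segment from `0` to `ξ`. -/
def conv (φ ψ : ℂ → ℂ) (ξ : ℂ) : ℂ :=
  ∫ s in (0 : ℝ)..1, φ (ξ - (s : ℂ) * ξ) * ψ ((s : ℂ) * ξ) * ξ

/-- Iterated (multi-fold) convolution of a list of functions. -/
def multConv : List (ℂ → ℂ) → (ℂ → ℂ)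
  | [] => fun _ => 0
  | [g] => g
  | g :: h :: t => conv g (multConv (h :: t))

/-! The majorant `A‖ξ‖^a/a!·e^{L‖ξ‖}` is stable under convolution on any domain star-shaped
about `0`: along the segment `[0, ξ]` the exponentials multiply to `e^{L‖ξ‖}`, and the polynomial
factors integrate by the Beta integral `∫₀¹ (1-s)^a s^b ds = a! b!/(a+b+1)!`, so the constants
multiply and the exponent becomes `a + b + 1`. Induction on the number of factors gives the
estimate. -/

open scoped Nat

theorem integral_one_sub_pow_mul_pow (a b : ℕ) :
    ∫ s in (0 : ℝ)..1, (1 - s) ^ a * s ^ b = (a ! * b ! : ℝ) / (a + b + 1)! := by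
  have hre : ∀ n : ℕ, 0 < ((n : ℂ) + 1).re := fun n => by
    simp only [Complex.add_re, Complex.natCast_re, Complex.one_re]; positivity
  have hbeta := Complex.Gamma_mul_Gamma_eq_betaIntegral (hre b) (hre a)
  rw [Complex.Gamma_nat_eq_factorial, Complex.Gamma_nat_eq_factorial,
    show (b : ℂ) + 1 + (a + 1) = ((a + b + 1 : ℕ) : ℂ) + 1 by push_cast; ring,
    Complex.Gamma_nat_eq_factorial, Complex.betaIntegral] at hbeta
  have hfact : ((a + b + 1)! : ℂ) ≠ 0 := by exact_mod_cast (a + b + 1).factorial_ne_zero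
  apply Complex.ofReal_injective
  rw [← intervalIntegral.integral_ofReal]
  push_cast
  rw [eq_div_iff hfact, mul_comm, mul_comm (a ! : ℂ), hbeta]
  congr 1
  refine intervalIntegral.integral_congr fun s _ => ?_
  simp only [add_sub_cancel_right, Complex.cpow_natCast]
  ring

theorem starConvex_Xi (ε : ℝ) : StarConvex ℝ 0 (Xi ε) := by
  refine starConvex_zero_iff.mpr fun ξ ⟨t, ht, hdist⟩ s hs₀ hs₁ => ⟨s * t, mul_nonneg hs₀ ht, ?_⟩
  calc dist (s • ξ) ((s * t : ℝ) : ℂ) = s * dist ξ t := by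
        rw [Complex.ofReal_mul, ← Complex.real_smul, dist_smul₀, Real.norm_of_nonneg hs₀]
    _ ≤ dist ξ t := mul_le_of_le_one_left dist_nonneg hs₁
    _ < ε := hdist

theorem multConv_cons (g : ℂ → ℂ) {l : List (ℂ → ℂ)} (hl : l ≠ []) :
    multConv (g :: l) = conv g (multConv l) := by
  cases l with
  | nil => exact absurd rfl hl
  | cons h t => rfl

def HasExpBound (S : Set ℂ) (L : ℝ) (a : ℕ) (A : ℝ) (f : ℂ → ℂ) : Prop :=
  ∀ ξ ∈ S, ‖f ξ‖ ≤ A * ‖ξ‖ ^ a / a ! * Real.exp (L * ‖ξ‖)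

namespace HasExpBound

variable {S : Set ℂ} {L : ℝ}

theorem norm_apply_ofReal_mul_le (hS : StarConvex ℝ 0 S) {a : ℕ} {A : ℝ} {f : ℂ → ℂ}
    (hf : HasExpBound S L a A f) {ξ : ℂ} (hξ : ξ ∈ S) {t : ℝ} (ht₀ : 0 ≤ t) (ht₁ : t ≤ 1) :
    ‖f (t * ξ)‖ ≤ A * (t * ‖ξ‖) ^ a / a ! * Real.exp (L * (t * ‖ξ‖)) := by
  have h := hf _ (hS.smul_mem hξ ht₀ ht₁)
  rwa [norm_smul, Real.norm_of_nonneg ht₀, Complex.real_smul] at h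

theorem conv (hS : StarConvex ℝ 0 S) {a b : ℕ} {A B : ℝ} {f g : ℂ → ℂ}
    (hf : HasExpBound S L a A f) (hg : HasExpBound S L b B g) :
    HasExpBound S L (a + b + 1) (A * B) (_root_.conv f g) := by
  intro ξ hξ
  set C := A * B * ‖ξ‖ ^ (a + b + 1) * Real.exp (L * ‖ξ‖) / (a ! * b !) with hC
  have hpointwise : ∀ s ∈ Set.Icc (0 : ℝ) 1,
      ‖f (ξ - s * ξ) * g (s * ξ) * ξ‖ ≤ C * ((1 - s) ^ a * s ^ b) := by
    rintro s ⟨hs₀, hs₁⟩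
    have hfs := hf.norm_apply_ofReal_mul_le hS hξ (sub_nonneg.mpr hs₁) (sub_le_self 1 hs₀)
    have hgs := hg.norm_apply_ofReal_mul_le hS hξ hs₀ hs₁
    rw [Complex.ofReal_sub, Complex.ofReal_one, sub_mul, one_mul] at hfs
    calc ‖f (ξ - s * ξ) * g (s * ξ) * ξ‖ = ‖f (ξ - s * ξ)‖ * ‖g (s * ξ)‖ * ‖ξ‖ := by
          rw [norm_mul, norm_mul]
      _ ≤ (A * ((1 - s) * ‖ξ‖) ^ a / a ! * Real.exp (L * ((1 - s) * ‖ξ‖))) *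
            (B * (s * ‖ξ‖) ^ b / b ! * Real.exp (L * (s * ‖ξ‖))) * ‖ξ‖ :=
          mul_le_mul_of_nonneg_right
            (mul_le_mul hfs hgs (norm_nonneg _) ((norm_nonneg _).trans hfs)) (norm_nonneg _)
      _ = C * ((1 - s) ^ a * s ^ b) := by
          have hexp : Real.exp (L * ((1 - s) * ‖ξ‖)) * Real.exp (L * (s * ‖ξ‖))
              = Real.exp (L * ‖ξ‖) := by
            rw [← Real.exp_add]; ring_nf
          simp only [hC, ← hexp, mul_pow, pow_add, pow_one]
          field_simp
  calc ‖_root_.conv f g ξ‖ ≤ ∫ s in (0 : ℝ)..1, C * ((1 - s) ^ a * s ^ b) :=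
        intervalIntegral.norm_integral_le_of_norm_le zero_le_one
          (ae_of_all _ fun s hs => hpointwise s (Set.Ioc_subset_Icc_self hs))
          (Continuous.intervalIntegrable (by fun_prop) 0 1)
    _ = A * B * ‖ξ‖ ^ (a + b + 1) / (a + b + 1)! * Real.exp (L * ‖ξ‖) := by
        rw [intervalIntegral.integral_const_mul, integral_one_sub_pow_mul_pow, hC]
        field_simp

theorem multConv_ofFn (hS : StarConvex ℝ 0 S) :
    ∀ {m : ℕ} {a : Fin (m + 1) → ℕ} {A : Fin (m + 1) → ℝ} {f : Fin (m + 1) → ℂ → ℂ},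
      (∀ k, HasExpBound S L (a k) (A k) (f k)) →
        HasExpBound S L (∑ k, a k + m) (∏ k, A k) (multConv (List.ofFn f))
  | 0, a, A, f, h => by simpa [multConv] using h 0
  | m + 1, a, A, f, h => by
    have hconv := (h 0).conv hS (multConv_ofFn hS fun k => h k.succ)
    rw [List.ofFn_succ, multConv_cons _ (by simp), Fin.prod_univ_succ, Fin.sum_univ_succ]
    rwa [show a 0 + ∑ k : Fin (m + 1), a k.succ + (m + 1)
      = a 0 + (∑ k : Fin (m + 1), a k.succ + m) + 1 by omega]

end HasExpBound

theorem convolution_estimate_general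
    (ε : ℝ)
    (m : ℕ) (hm : 1 ≤ m)
    (idx : Fin m → ℕ)
    (f : Fin m → (ℂ → ℂ))
    (Mc : Fin m → ℝ)
    (L : ℝ)
    (hbd : ∀ k : Fin m, ∀ ξ ∈ Xi ε,
      ‖f k ξ‖ ≤ Mc k * ‖ξ‖ ^ idx k / ((idx k).factorial : ℝ) * Real.exp (L * ‖ξ‖)) :
    ∀ ξ ∈ Xi ε,
      ‖multConv (List.ofFn f) ξ‖ ≤
        (∏ k, Mc k) * ‖ξ‖ ^ ((∑ k, idx k) + m - 1) /
          (((∑ k, idx k) + m - 1).factorial : ℝ) * Real.exp (L * ‖ξ‖) := by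
  obtain ⟨m, rfl⟩ := Nat.exists_eq_add_of_le' hm
  rw [← add_assoc, Nat.add_sub_cancel]
  exact HasExpBound.multConv_ofFn (starConvex_Xi ε) hbd

/-- **Convolution estimate.** If `|f_{i_k}(ξ)| ≤ M_{i_k}·|ξ|^{i_k}/i_k!·e^{L|ξ|}` on `Ξ`
for `k = 1, …, m`, then the `m`-fold convolution satisfies
`|(f_{i₁} ∗ ⋯ ∗ f_{i_m})(ξ)| ≤ M_{i₁}⋯M_{i_m}·|ξ|^{n+m−1}/(n+m−1)!·e^{L|ξ|}`,
where `n = i₁ + ⋯ + i_m`. -/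
theorem convolution_estimate
    (ε : ℝ) (hε : 0 < ε)
    (m : ℕ) (hm : 1 ≤ m)
    (idx : Fin m → ℕ)
    (f : Fin m → (ℂ → ℂ))
    (hf : ∀ k : Fin m, DifferentiableOn ℂ (f k) (Xi ε))
    (Mc : Fin m → ℝ) (hMc : ∀ k, 0 ≤ Mc k)
    (L : ℝ) (hL : 0 ≤ L)
    (hbd : ∀ k : Fin m, ∀ ξ ∈ Xi ε,
      ‖f k ξ‖ ≤ Mc k * ‖ξ‖ ^ idx k / ((idx k).factorial : ℝ) * Real.exp (L * ‖ξ‖)) :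
    ∀ ξ ∈ Xi ε,
      ‖multConv (List.ofFn f) ξ‖ ≤
        (∏ k, Mc k) * ‖ξ‖ ^ ((∑ k, idx k) + m - 1) /
          (((∑ k, idx k) + m - 1).factorial : ℝ) * Real.exp (L * ‖ξ‖) :=
  convolution_estimate_general ε m hm idx f Mc L hbd
end
end

section
/- Exponential bound for the Gevrey recursion sequence. Let A, B > 0 be real constants. Define a sequence of nonnegative reals by M₀ := 0 and, for every n ≥ 0, M_{n+1} := A·Σ_{k=0}^{n} Bᵏ·Σ_{m=0}^{n−k} Bᵐ·Σ_{i₁+⋯+i_m = n−k, i_j ≥ 0} M_{i₁}⋯M_{i_m} (the empty product for m = 0 being 1, contributing only when k = n). Then there exists a constant M > 0 such that M_n ≤ Mⁿ for all n ∈ ℕ. -/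
/-- The finite set of compositions of `j` into `m` (nonnegative) parts. -/
def comps (m j : ℕ) : Finset (Fin m → ℕ) :=
  (Fintype.piFinset fun _ : Fin m => Finset.range (j + 1)).filter fun t => ∑ i, t i = j

namespace GevreyAux

lemma mem_comps {m j : ℕ} {t : Fin m → ℕ} : t ∈ comps m j ↔ ∑ i, t i = j := by
  constructor
  · intro h; exact (Finset.mem_filter.1 h).2
  · intro h
    refine Finset.mem_filter.2 ⟨Fintype.mem_piFinset.2 fun i => ?_, h⟩
    exact Finset.mem_range.2 (Nat.lt_succ_of_le
      (h ▸ Finset.single_le_sum (fun _ _ => Nat.zero_le _) (Finset.mem_univ i)))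

lemma le_of_mem_comps {m j : ℕ} {t : Fin m → ℕ} (ht : t ∈ comps m j) (l : Fin m) : t l ≤ j :=
  (mem_comps.1 ht) ▸ Finset.single_le_sum (fun _ _ => Nat.zero_le _) (Finset.mem_univ l)

lemma sum_comps_succ {M : Type*} [AddCommMonoid M] (m j : ℕ) (F : (Fin (m+1) → ℕ) → M) :
    ∑ t ∈ comps (m+1) j, F t
      = ∑ i ∈ Finset.range (j+1), ∑ s ∈ comps m (j - i), F (Fin.cons i s) := by
  rw [← Finset.sum_sigma (Finset.range (j+1)) (fun i => comps m (j - i))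
    (fun p => F (Fin.cons p.1 p.2))]
  refine Finset.sum_bij' (fun t _ => (⟨t 0, Fin.tail t⟩ : Σ _ : ℕ, Fin m → ℕ))
    (fun p _ => Fin.cons p.1 p.2) ?_ ?_ ?_ ?_ ?_
  · intro t ht
    have hsum : ∑ i, t i = j := mem_comps.1 ht
    have h0 : t 0 ≤ j := le_of_mem_comps ht 0
    refine Finset.mem_sigma.2 ⟨Finset.mem_range.2 (Nat.lt_succ_of_le h0), mem_comps.2 ?_⟩
    have htail : (∑ i, Fin.tail t i) = ∑ i : Fin m, t i.succ := rfl
    rw [htail]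
    rw [Fin.sum_univ_succ] at hsum
    exact Nat.eq_sub_of_add_eq' hsum
  · intro p hp
    obtain ⟨h1, h2⟩ := Finset.mem_sigma.1 hp
    have h1' : p.1 ≤ j := Nat.lt_succ_iff.1 (Finset.mem_range.1 h1)
    refine mem_comps.2 ?_
    rw [Fin.sum_cons, mem_comps.1 h2]
    exact Nat.add_sub_cancel' h1'
  · intro t ht; exact Fin.cons_self_tail t
  · intro p hp; simp
  · intro t ht; rw [Fin.cons_self_tail]

lemma sum_comps_zero {M : Type*} [AddCommMonoid M] (j : ℕ) (F : (Fin 0 → ℕ) → M) :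
    ∑ t ∈ comps 0 j, F t = if j = 0 then F (fun i => i.elim0) else 0 := by
  rcases Nat.eq_zero_or_pos j with h | h
  · subst h
    have hc : comps 0 0 = {fun i => i.elim0} := by
      ext t
      simp only [mem_comps, Finset.mem_singleton]
      constructor
      · intro _; funext i; exact i.elim0
      · intro h; subst h; simp
    rw [hc, Finset.sum_singleton]; simp
  · have hc : comps 0 j = ∅ := by
      ext t
      simp only [mem_comps, Finset.notMem_empty, iff_false]
      simp; omega
    rw [hc]
    simp [Nat.pos_iff_ne_zero.1 h]

noncomputable def w (i : ℕ) : ℝ := if i = 0 then 0 else 1 / (i:ℝ)^2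

lemma w_nonneg (i : ℕ) : 0 ≤ w i := by unfold w; split <;> positivity

lemma w_zero : w 0 = 0 := rfl

lemma w_pos_eq {i : ℕ} (h : i ≠ 0) : w i = 1 / (i:ℝ)^2 := by unfold w; simp [h]

lemma w_le_one (i : ℕ) : w i ≤ 1 := by
  unfold w; split
  · norm_num
  · rename_i h
    rw [div_le_one (by positivity)]
    have : (1:ℝ) ≤ (i:ℝ) := by exact_mod_cast Nat.one_le_iff_ne_zero.2 h
    nlinarith

lemma sum_w_le (j : ℕ) : ∑ i ∈ Finset.range (j+1), w i ≤ 2 - 2/((j:ℝ)+1) := by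
  induction j with
  | zero => simp [w]
  | succ j ih =>
    rw [Finset.sum_range_succ]
    have hw : w (j+1) = 1/((j:ℝ)+1)^2 := by rw [w_pos_eq (Nat.succ_ne_zero j)]; push_cast; ring_nf
    have key : 1/((j:ℝ)+1)^2 ≤ 2/((j:ℝ)+1) - 2/((j:ℝ)+1+1) := by
      have h1 : (0:ℝ) < (j:ℝ)+1 := by positivity
      have h2 : (0:ℝ) < (j:ℝ)+1+1 := by positivity
      rw [div_sub_div _ _ (ne_of_gt h1) (ne_of_gt h2),
        div_le_div_iff₀ (by positivity) (by positivity)]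
      nlinarith
    push_cast
    linarith [ih]

lemma sum_w_le' (j : ℕ) : ∑ i ∈ Finset.range (j+1), w i ≤ 2 := by
  have h1 : (0:ℝ) < (j:ℝ)+1 := by positivity
  have : 0 ≤ 2/((j:ℝ)+1) := by positivity
  linarith [sum_w_le j]

lemma real_conv {a b : ℝ} (ha : 1 ≤ a) (hb : 1 ≤ b) :
    1/a^2 * (1/b^2) ≤ 2/(a+b)^2 * (1/a^2 + 1/b^2) := by
  have ha0 : (0:ℝ) < a := by linarith
  have hb0 : (0:ℝ) < b := by linarith
  rw [div_add_div _ _ (by positivity) (by positivity), div_mul_div_comm, div_mul_div_comm,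
    div_le_div_iff₀ (by positivity) (by positivity)]
  nlinarith [sq_nonneg (a-b), mul_pos ha0 hb0, sq_nonneg (a*b),
    mul_pos (mul_pos ha0 hb0) (mul_pos ha0 hb0)]

lemma conv_w (j : ℕ) : ∑ i ∈ Finset.range (j+1), w i * w (j - i) ≤ 8 * w j := by
  have hpt : ∀ i ∈ Finset.range (j+1), w i * w (j - i) ≤ 2 * w j * (w i + w (j - i)) := by
    intro i hi
    have hij : i ≤ j := Nat.lt_succ_iff.1 (Finset.mem_range.1 hi)
    rcases Nat.eq_zero_or_pos i with h0 | h0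
    · subst h0; rw [w_zero, zero_mul]
      nlinarith [w_nonneg j, w_nonneg 0, w_nonneg (j-0), mul_nonneg (w_nonneg j) (w_nonneg (j-0)),
        mul_nonneg (w_nonneg j) (w_nonneg 0)]
    rcases Nat.eq_zero_or_pos (j - i) with h1 | h1
    · rw [h1, w_zero, mul_zero]
      nlinarith [w_nonneg j, w_nonneg i, mul_nonneg (w_nonneg j) (w_nonneg i)]
    have hj0 : j ≠ 0 := by omega
    rw [w_pos_eq (by omega), w_pos_eq (by omega), w_pos_eq hj0]
    have hcast : (j:ℝ) = (i:ℝ) + ((j-i:ℕ):ℝ) := by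
      push_cast [Nat.cast_sub hij]; ring
    rw [hcast]
    have := real_conv (a := (i:ℝ)) (b := ((j-i:ℕ):ℝ))
      (by exact_mod_cast h0) (by exact_mod_cast h1)
    calc 1/(i:ℝ)^2 * (1/((j-i:ℕ):ℝ)^2)
        ≤ 2/((i:ℝ)+((j-i:ℕ):ℝ))^2 * (1/(i:ℝ)^2 + 1/((j-i:ℕ):ℝ)^2) := this
      _ = 2 * (1/((i:ℝ)+((j-i:ℕ):ℝ))^2) * (1/(i:ℝ)^2 + 1/((j-i:ℕ):ℝ)^2) := by ring
  calc ∑ i ∈ Finset.range (j+1), w i * w (j - i)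
      ≤ ∑ i ∈ Finset.range (j+1), 2 * w j * (w i + w (j - i)) := Finset.sum_le_sum hpt
    _ = 2 * w j * ((∑ i ∈ Finset.range (j+1), w i) + ∑ i ∈ Finset.range (j+1), w (j - i)) := by
        rw [← Finset.sum_add_distrib, Finset.mul_sum]
    _ ≤ 2 * w j * (2 + 2) := by
        have h1 : ∑ i ∈ Finset.range (j+1), w (j - i) = ∑ i ∈ Finset.range (j+1), w i := by
          have := Finset.sum_range_reflect (fun i => w i) (j+1)
          simpa using this
        rw [h1]
        have hwj := w_nonneg j
        nlinarith [sum_w_le' j]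
    _ = 8 * w j := by ring

lemma P_succ (m j : ℕ) :
    ∑ t ∈ comps (m+1) j, ∏ l, w (t l)
      = ∑ i ∈ Finset.range (j+1), w i * ∑ s ∈ comps m (j - i), ∏ l, w (s l) := by
  rw [sum_comps_succ m j (fun t => ∏ l, w (t l))]
  refine Finset.sum_congr rfl fun i _ => ?_
  rw [Finset.mul_sum]
  refine Finset.sum_congr rfl fun s _ => ?_
  rw [Fin.prod_univ_succ]
  simp [Fin.cons_succ]

lemma P_le (m j : ℕ) : ∑ t ∈ comps (m+1) j, ∏ l, w (t l) ≤ 8^m * w j := by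
  induction m generalizing j with
  | zero =>
    rw [P_succ]
    have heq : ∀ i ∈ Finset.range (j+1),
        w i * ∑ s ∈ comps 0 (j - i), ∏ l, w (s l) = if i = j then w j else 0 := by
      intro i hi
      have hij : i ≤ j := Nat.lt_succ_iff.1 (Finset.mem_range.1 hi)
      rw [sum_comps_zero]
      by_cases h : i = j
      · subst h; simp
      · have : j - i ≠ 0 := by omega
        simp [this, h]
    rw [Finset.sum_congr rfl heq, Finset.sum_ite_eq' (Finset.range (j+1)) j fun _ => w j]
    simp
  | succ m ih =>
    rw [P_succ]
    calc ∑ i ∈ Finset.range (j+1), w i * ∑ s ∈ comps (m+1) (j - i), ∏ l, w (s l)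
        ≤ ∑ i ∈ Finset.range (j+1), w i * (8^m * w (j - i)) := by
          refine Finset.sum_le_sum fun i _ => ?_
          exact mul_le_mul_of_nonneg_left (ih (j - i)) (w_nonneg i)
      _ = 8^m * ∑ i ∈ Finset.range (j+1), w i * w (j - i) := by
          rw [Finset.mul_sum]; refine Finset.sum_congr rfl fun i _ => by ring
      _ ≤ 8^m * (8 * w j) := by
          refine mul_le_mul_of_nonneg_left (conv_w j) (by positivity)
      _ = 8^(m+1) * w j := by ring

lemma nat_sq_le (n : ℕ) : (n+1)^2 ≤ 4^n := by
  induction n with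
  | zero => norm_num
  | succ n ih =>
    have h1 : (n+2)^2 ≤ 4*(n+1)^2 := by
      have h2 : (n+2) ≤ 2*(n+1) := by omega
      calc (n+2)^2 ≤ (2*(n+1))^2 := Nat.pow_le_pow_left h2 2
        _ = 4*(n+1)^2 := by ring
    calc (n+1+1)^2 ≤ 4*(n+1)^2 := h1
      _ ≤ 4*4^n := by omega
      _ = 4^(n+1) := by ring

lemma real_sq_le (n : ℕ) : ((n:ℝ)+1)^2 ≤ 4^n := by
  have := nat_sq_le n
  have h : (((n+1)^2 : ℕ):ℝ) ≤ ((4^n : ℕ):ℝ) := by exact_mod_cast this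
  push_cast at h
  linarith

lemma geom_le {r : ℝ} (h0 : 0 ≤ r) (h : r ≤ 1/2) (n : ℕ) :
    ∑ k ∈ Finset.range n, r^k ≤ 2 := by
  have key : ∀ n : ℕ, ∑ k ∈ Finset.range n, r^k ≤ 2 - 2*r^n := by
    intro n
    induction n with
    | zero => simp
    | succ n ih =>
      rw [Finset.sum_range_succ]
      have hrn : 0 ≤ r^n := by positivity
      have : r^(n+1) = r * r^n := by ring
      nlinarith
  have := key n
  have : 0 ≤ r^n := by positivity
  linarith [key n]

end GevreyAux

open GevreyAux

set_option maxHeartbeats 1000000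

/-- **Exponential bound for the Gevrey recursion sequence.** If `M₀ = 0` and
`M_{n+1} = A·Σ_{k=0}^{n} Bᵏ·Σ_{m=0}^{n−k} Bᵐ·Σ_{i₁+⋯+i_m=n−k} M_{i₁}⋯M_{i_m}`,
then `M_n ≤ Mⁿ` for some constant `M > 0`. -/
theorem gevrey_recursion_exponential_bound
    (A B : ℝ) (hA : 0 < A) (hB : 0 < B)
    (Mseq : ℕ → ℝ)
    (h0 : Mseq 0 = 0)
    (hrec : ∀ n : ℕ, Mseq (n + 1) =
      A * ∑ k ∈ Finset.range (n + 1), B ^ k *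
        ∑ m ∈ Finset.range (n - k + 1), B ^ m *
          ∑ t ∈ comps m (n - k), ∏ j, Mseq (t j)) :
    ∃ M > (0 : ℝ), ∀ n : ℕ, Mseq n ≤ M ^ n := by
  obtain ⟨ε, hε0, hε1, hεB⟩ : ∃ ε : ℝ, 0 < ε ∧ ε ≤ 1 ∧ B * ε ≤ 1/16 := by
    refine ⟨min 1 (1/(16*B)), lt_min one_pos (by positivity), min_le_left _ _, ?_⟩
    have h2 : min 1 (1/(16*B)) ≤ 1/(16*B) := min_le_right _ _
    have h3 : B * (1/(16*B)) = 1/16 := by field_simp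
    calc B * min 1 (1/(16*B)) ≤ B * (1/(16*B)) := by
          exact mul_le_mul_of_nonneg_left h2 hB.le
      _ = 1/16 := h3
  obtain ⟨C, hC0, hC1, hCB, hCAB, hCA⟩ :
      ∃ C : ℝ, 0 < C ∧ 1 ≤ C ∧ 16*B ≤ C ∧ 32*A*B ≤ C ∧ 2*A ≤ ε*C := by
    refine ⟨16*B + 32*A*B + 2*A/ε + 1, ?_, ?_, ?_, ?_, ?_⟩
    · positivity
    · have h1 : 0 ≤ 16*B := by linarith
      have h2 : 0 ≤ 32*A*B := by positivity
      have h3 : 0 ≤ 2*A/ε := by positivity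
      linarith
    · have h2 : 0 ≤ 32*A*B := by positivity
      have h3 : 0 ≤ 2*A/ε := by positivity
      linarith
    · have h1 : 0 ≤ 16*B := by linarith
      have h3 : 0 ≤ 2*A/ε := by positivity
      linarith
    · have hEC : ε*(16*B + 32*A*B + 2*A/ε + 1) = 16*B*ε + 32*A*B*ε + 2*A + ε := by
        field_simp
      have n1 : 0 ≤ 16*B*ε := by positivity
      have n2 : 0 ≤ 32*A*B*ε := by positivity
      linarith
  have hBe : (0:ℝ) ≤ B*ε := mul_nonneg hB.le hε0.le
  -- nonnegativity
  have hnn : ∀ n, 0 ≤ Mseq n := by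
    intro n
    induction n using Nat.strong_induction_on with
    | _ n ih =>
      rcases n with _ | n
      · rw [h0]
      · rw [hrec n]
        refine mul_nonneg hA.le (Finset.sum_nonneg fun k _ =>
          mul_nonneg (pow_nonneg hB.le _) ?_)
        refine Finset.sum_nonneg fun m _ => mul_nonneg (pow_nonneg hB.le _) ?_
        refine Finset.sum_nonneg fun t ht => Finset.prod_nonneg fun l _ => ?_
        exact ih (t l) (by have := le_of_mem_comps ht l; omega)
  -- key induction
  have key : ∀ n, Mseq n ≤ ε * C^n * w n := by
    intro n
    induction n using Nat.strong_induction_on with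
    | _ n ih =>
      rcases n with _ | n
      · rw [h0, w_zero, mul_zero]
      · -- inner bound over m, for every j ≤ n
        have step : ∀ j, j ≤ n →
            (∑ m ∈ Finset.range (j+1), B^m * ∑ t ∈ comps m j, ∏ l, Mseq (t l))
              ≤ (if j = 0 then 1 else 0) + 2*(B*ε) * (C^j * w j) := by
          intro j hj
          have prodM : ∀ m : ℕ, ∑ t ∈ comps m j, ∏ l, Mseq (t l)
              ≤ ε^m * C^j * ∑ t ∈ comps m j, ∏ l, w (t l) := by
            intro m
            have hpt : ∀ t ∈ comps m j, (∏ l, Mseq (t l)) ≤ ∏ l, (ε * C^(t l) * w (t l)) := by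
              intro t ht
              refine Finset.prod_le_prod (fun l _ => hnn _) (fun l _ => ?_)
              exact ih (t l) (by have := le_of_mem_comps ht l; omega)
            calc ∑ t ∈ comps m j, ∏ l, Mseq (t l)
                ≤ ∑ t ∈ comps m j, ∏ l, (ε * C^(t l) * w (t l)) := Finset.sum_le_sum hpt
              _ = ∑ t ∈ comps m j, ε^m * C^j * ∏ l, w (t l) := by
                  refine Finset.sum_congr rfl fun t ht => ?_
                  rw [Finset.prod_mul_distrib, Finset.prod_mul_distrib, Finset.prod_const,
                    Finset.prod_pow_eq_pow_sum, mem_comps.1 ht]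
                  simp
              _ = ε^m * C^j * ∑ t ∈ comps m j, ∏ l, w (t l) := by rw [Finset.mul_sum]
          rw [Finset.sum_range_succ']
          have h00 : B^0 * (∑ t ∈ comps 0 j, ∏ l, Mseq (t l)) = (if j = 0 then (1:ℝ) else 0) := by
            rw [pow_zero, one_mul, sum_comps_zero]
            split <;> simp
          have hms : ∑ m ∈ Finset.range j, B^(m+1) * ∑ t ∈ comps (m+1) j, ∏ l, Mseq (t l)
              ≤ 2*(B*ε) * (C^j * w j) := by
            have hcx : (0:ℝ) ≤ C^j * w j := mul_nonneg (pow_nonneg hC0.le j) (w_nonneg j)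
            calc ∑ m ∈ Finset.range j, B^(m+1) * ∑ t ∈ comps (m+1) j, ∏ l, Mseq (t l)
                ≤ ∑ m ∈ Finset.range j, (B*ε) * (1/2:ℝ)^m * (C^j * w j) := by
                  refine Finset.sum_le_sum fun m _ => ?_
                  have h1 : ∑ t ∈ comps (m+1) j, ∏ l, Mseq (t l)
                      ≤ ε^(m+1) * C^j * (8^m * w j) :=
                    le_trans (prodM (m+1))
                      (mul_le_mul_of_nonneg_left (P_le m j)
                        (mul_nonneg (pow_nonneg hε0.le _) (pow_nonneg hC0.le _)))
                  have h2 : B^(m+1) * (ε^(m+1) * C^j * (8^m * w j))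
                      = (B*ε) * (8*(B*ε))^m * (C^j * w j) := by
                    rw [mul_pow, mul_pow]; ring
                  have h3 : (8*(B*ε))^m ≤ (1/2:ℝ)^m :=
                    pow_le_pow_left₀ (mul_nonneg (by norm_num) hBe) (by linarith) m
                  calc B^(m+1) * ∑ t ∈ comps (m+1) j, ∏ l, Mseq (t l)
                      ≤ B^(m+1) * (ε^(m+1) * C^j * (8^m * w j)) :=
                        mul_le_mul_of_nonneg_left h1 (pow_nonneg hB.le _)
                    _ = (B*ε) * (8*(B*ε))^m * (C^j * w j) := h2
                    _ ≤ (B*ε) * (1/2:ℝ)^m * (C^j * w j) :=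
                        mul_le_mul_of_nonneg_right
                          (mul_le_mul_of_nonneg_left h3 hBe) hcx
              _ = (B*ε) * (∑ m ∈ Finset.range j, (1/2:ℝ)^m) * (C^j * w j) := by
                  rw [Finset.mul_sum, Finset.sum_mul]
              _ ≤ (B*ε) * 2 * (C^j * w j) :=
                  mul_le_mul_of_nonneg_right
                    (mul_le_mul_of_nonneg_left (geom_le (by norm_num) (by norm_num) j) hBe) hcx
              _ = 2*(B*ε) * (C^j * w j) := by ring
          linarith [hms, h00.le, h00.ge]
        rw [hrec n]
        have houter : ∑ k ∈ Finset.range (n+1), B^k *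
            (∑ m ∈ Finset.range (n-k+1), B^m * ∑ t ∈ comps m (n-k), ∏ l, Mseq (t l))
            ≤ ∑ k ∈ Finset.range (n+1), B^k *
              ((if n-k = 0 then (1:ℝ) else 0) + 2*(B*ε) * (C^(n-k) * w (n-k))) := by
          refine Finset.sum_le_sum fun k _ => ?_
          exact mul_le_mul_of_nonneg_left (step (n-k) (Nat.sub_le n k)) (pow_nonneg hB.le k)
        have hsplit : ∑ k ∈ Finset.range (n+1), B^k *
              ((if n-k = 0 then (1:ℝ) else 0) + 2*(B*ε) * (C^(n-k) * w (n-k)))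
            = (∑ k ∈ Finset.range (n+1), B^k * (if n-k = 0 then (1:ℝ) else 0))
              + 2*(B*ε) * ∑ k ∈ Finset.range (n+1), B^k * (C^(n-k) * w (n-k)) := by
          rw [Finset.mul_sum, ← Finset.sum_add_distrib]
          refine Finset.sum_congr rfl fun k _ => by ring
        have hind : ∑ k ∈ Finset.range (n+1), B^k * (if n-k = 0 then (1:ℝ) else 0) = B^n := by
          rw [Finset.sum_eq_single n]
          · simp
          · intro k hk hkn
            have hne : n - k ≠ 0 := by
              have := Finset.mem_range.1 hk; omega
            simp [hne]
          · intro h; exact absurd (Finset.self_mem_range_succ n) h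
        have hwn1 : w (n+1) = 1/((n:ℝ)+1)^2 := by
          rw [w_pos_eq (Nat.succ_ne_zero n)]; push_cast; ring_nf
        have hXnn : (0:ℝ) ≤ w (n+1) := w_nonneg _
        have hCXnn : (0:ℝ) ≤ C^n * w (n+1) := mul_nonneg (pow_nonneg hC0.le n) hXnn
        have hgeo : ∑ k ∈ Finset.range (n+1), B^k * (C^(n-k) * w (n-k))
            ≤ 8 * (C^n * w (n+1)) := by
          have hpt : ∀ k ∈ Finset.range (n+1),
              B^k * (C^(n-k) * w (n-k)) ≤ 4 * (1/4:ℝ)^k * (C^n * w (n+1)) := by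
            intro k hk
            have hkn : k ≤ n := Nat.lt_succ_iff.1 (Finset.mem_range.1 hk)
            rcases Nat.eq_zero_or_pos (n - k) with hl | hl
            · rw [hl, w_zero, mul_zero, mul_zero]
              exact mul_nonneg (mul_nonneg (by norm_num) (pow_nonneg (by norm_num) k)) hCXnn
            · set l := n - k with hldef
              have hn : n = k + l := by omega
              have hwl : w l = 1/(l:ℝ)^2 := w_pos_eq (by omega)
              have hl1 : (1:ℝ) ≤ (l:ℝ) := by exact_mod_cast hl
              have hk0 : (0:ℝ) ≤ (k:ℝ) := Nat.cast_nonneg k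
              have hnk : ((n:ℝ)+1) ≤ 2*((k:ℝ)+1)*(l:ℝ) := by
                have hcast : (n:ℝ) = (k:ℝ) + (l:ℝ) := by exact_mod_cast hn
                nlinarith [mul_nonneg hk0 (by linarith : (0:ℝ) ≤ 2*(l:ℝ)-1)]
              have hsq : ((n:ℝ)+1)^2 ≤ 4*((k:ℝ)+1)^2*(l:ℝ)^2 := by
                have hp := pow_le_pow_left₀ (by positivity : (0:ℝ) ≤ (n:ℝ)+1) hnk 2
                calc ((n:ℝ)+1)^2 ≤ (2*((k:ℝ)+1)*(l:ℝ))^2 := hp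
                  _ = 4*((k:ℝ)+1)^2*(l:ℝ)^2 := by ring
              have hW : w l ≤ 4*((k:ℝ)+1)^2 * w (n+1) := by
                rw [hwl, hwn1, mul_one_div, div_le_div_iff₀ (by positivity) (by positivity)]
                nlinarith [hsq]
              have hW2 : w l ≤ 4*(4:ℝ)^k * w (n+1) := by
                have h4 : 4*((k:ℝ)+1)^2 ≤ 4*(4:ℝ)^k := by
                  have := real_sq_le k; linarith
                calc w l ≤ 4*((k:ℝ)+1)^2 * w (n+1) := hW
                  _ ≤ 4*(4:ℝ)^k * w (n+1) := mul_le_mul_of_nonneg_right h4 hXnn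
              have hBk : B^k ≤ C^k/(16:ℝ)^k := by
                have hb16 : B ≤ C/16 := by linarith
                calc B^k ≤ (C/16)^k := pow_le_pow_left₀ hB.le hb16 k
                  _ = C^k/(16:ℝ)^k := div_pow C 16 k
              have hinner : C^l * w l ≤ C^l * (4*(4:ℝ)^k * w (n+1)) :=
                mul_le_mul_of_nonneg_left hW2 (pow_nonneg hC0.le l)
              calc B^k * (C^l * w l)
                  ≤ (C^k/(16:ℝ)^k) * (C^l * (4*(4:ℝ)^k * w (n+1))) := by
                    refine mul_le_mul hBk hinner
                      (mul_nonneg (pow_nonneg hC0.le l) (w_nonneg l)) ?_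
                    have : (0:ℝ) < (16:ℝ)^k := by positivity
                    exact div_nonneg (pow_nonneg hC0.le k) this.le
                _ = 4 * (1/4:ℝ)^k * (C^n * w (n+1)) := by
                    rw [hn, pow_add]
                    have h16 : (16:ℝ)^k = 4^k*4^k := by rw [← mul_pow]; norm_num
                    rw [h16, div_pow]
                    field_simp
                    ring
          calc ∑ k ∈ Finset.range (n+1), B^k * (C^(n-k) * w (n-k))
              ≤ ∑ k ∈ Finset.range (n+1), 4 * (1/4:ℝ)^k * (C^n * w (n+1)) :=
                Finset.sum_le_sum hpt
            _ = 4 * (C^n * w (n+1)) * ∑ k ∈ Finset.range (n+1), (1/4:ℝ)^k := by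
                rw [Finset.mul_sum]
                refine Finset.sum_congr rfl fun k _ => by ring
            _ ≤ 4 * (C^n * w (n+1)) * 2 := by
                refine mul_le_mul_of_nonneg_left (geom_le (by norm_num) (by norm_num) (n+1)) ?_
                linarith
            _ = 8 * (C^n * w (n+1)) := by ring
        calc A * ∑ k ∈ Finset.range (n+1), B^k *
              (∑ m ∈ Finset.range (n-k+1), B^m * ∑ t ∈ comps m (n-k), ∏ l, Mseq (t l))
            ≤ A * (B^n + 2*(B*ε) * (8*(C^n * w (n+1)))) := by
              refine mul_le_mul_of_nonneg_left ?_ hA.le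
              calc ∑ k ∈ Finset.range (n+1), B^k *
                    (∑ m ∈ Finset.range (n-k+1), B^m * ∑ t ∈ comps m (n-k), ∏ l, Mseq (t l))
                  ≤ _ := houter
                _ = B^n + 2*(B*ε) * ∑ k ∈ Finset.range (n+1), B^k * (C^(n-k) * w (n-k)) := by
                    rw [hsplit, hind]
                _ ≤ B^n + 2*(B*ε) * (8*(C^n * w (n+1))) := by
                    have hbe2 : (0:ℝ) ≤ 2*(B*ε) := by linarith
                    have := mul_le_mul_of_nonneg_left hgeo hbe2
                    linarith
          _ ≤ ε * C^(n+1) * w (n+1) := by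
              have hD : (0:ℝ) < ((n:ℝ)+1)^2 := by positivity
              have p1 : A * B^n ≤ (ε*C/2) * C^n * w (n+1) := by
                rw [hwn1, mul_one_div, le_div_iff₀ hD]
                calc A*B^n*((n:ℝ)+1)^2 ≤ A*B^n*4^n := by
                      have hsq := real_sq_le n
                      have hab : (0:ℝ) ≤ A*B^n := mul_nonneg hA.le (pow_nonneg hB.le n)
                      nlinarith
                  _ = A*(4*B)^n := by rw [mul_pow]; ring
                  _ ≤ (ε*C/2)*C^n := by
                      have h4B : (4*B)^n ≤ C^n :=
                        pow_le_pow_left₀ (by linarith) (by linarith) n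
                      have hA2 : A ≤ ε*C/2 := by linarith
                      have h4Bnn : (0:ℝ) ≤ (4*B)^n := pow_nonneg (by linarith) n
                      have hCn : (0:ℝ) ≤ C^n := pow_nonneg hC0.le n
                      nlinarith
              have p2 : A * (2*(B*ε)*(8*(C^n * w (n+1)))) ≤ (ε*C/2) * C^n * w (n+1) := by
                have heq : A * (2*(B*ε)*(8*(C^n * w (n+1)))) = (16*A*B)*ε*(C^n*w (n+1)) := by
                  ring
                rw [heq]
                have h32 : 16*A*B ≤ C/2 := by linarith
                calc (16*A*B)*ε*(C^n*w (n+1)) ≤ (C/2)*ε*(C^n*w (n+1)) :=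
                      mul_le_mul_of_nonneg_right
                        (mul_le_mul_of_nonneg_right h32 hε0.le) hCXnn
                  _ = (ε*C/2) * C^n * w (n+1) := by ring
              calc A * (B^n + 2*(B*ε)*(8*(C^n * w (n+1))))
                  = A*B^n + A*(2*(B*ε)*(8*(C^n * w (n+1)))) := by ring
                _ ≤ (ε*C/2)*C^n*w (n+1) + (ε*C/2)*C^n*w (n+1) := add_le_add p1 p2
                _ = ε * C^(n+1) * w (n+1) := by rw [pow_succ]; ring
  refine ⟨C, hC0, fun n => ?_⟩
  calc Mseq n ≤ ε * C^n * w n := key n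
    _ ≤ C^n := by
        have h1 : w n ≤ 1 := w_le_one n
        have h2 : 0 ≤ w n := w_nonneg n
        have h3 : (0:ℝ) ≤ C^n := pow_nonneg hC0.le n
        have h4 : ε * w n ≤ 1 := by nlinarith [mul_nonneg (sub_nonneg.2 hε1) h2]
        calc ε * C^n * w n = (ε * w n) * C^n := by ring
          _ ≤ 1 * C^n := mul_le_mul_of_nonneg_right h4 h3
          _ = C^n := one_mul _
end

section
/- Exponential bound for the Borel-plane recursion sequence. Let B, C > 0 be real constants. Define a sequence of nonnegative reals by M_n := Σ_{m=0}^{n} C·Bᵐ·( Σ_{i₁+⋯+i_m = n−m, i_j ≥ 0} M_{i₁}⋯M_{i_m} + Σ_{i₁+⋯+i_m = n−m−1, i_j ≥ 0} M_{i₁}⋯M_{i_m} ) for every n ≥ 0, where empty products (m = 0) equal 1 and sums over compositions of a negative integer are 0 (so M₀ = C, M₁ = C·(1 + B·M₀), and in general the right-hand side involves only M_i with i < n). Then there exist constants D, M > 0 such that M_n ≤ D·Mⁿ for all n ∈ ℕ. -/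
open Finset

section Compositions

variable {R : Type*}

lemma mem_comps {m j : ℕ} {t : Fin m → ℕ} : t ∈ comps m j ↔ ∑ i, t i = j := by
  simp only [comps, mem_filter, Fintype.mem_piFinset, mem_range, and_iff_right_iff_imp]
  rintro rfl i
  exact Nat.lt_succ_of_le (single_le_sum (fun _ _ => Nat.zero_le _) (mem_univ i))

lemma lt_of_mem_comps {m j : ℕ} {t : Fin m → ℕ} (ht : t ∈ comps m j) (i : Fin m) :
    t i < j + m := by
  have : t i ≤ j := mem_comps.mp ht ▸ single_le_sum (fun _ _ => Nat.zero_le _) (mem_univ i)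
  have := i.pos
  omega

variable [CommSemiring R]

/-- The coefficient of `x ^ j` in `(∑ k, f k * x ^ k) ^ m`. -/
def compSum (f : ℕ → R) (m j : ℕ) : R :=
  ∑ t ∈ comps m j, ∏ i, f (t i)

lemma compSum_zero_left (f : ℕ → R) (j : ℕ) : compSum f 0 j = if j = 0 then 1 else 0 := by
  rw [compSum]
  split_ifs with hj
  · have : comps 0 j = {![]} := by ext t; simp [mem_comps, hj, Subsingleton.elim t ![]]
    simp [this]
  · have : comps 0 j = ∅ := by ext t; simp [mem_comps, Ne.symm hj]
    simp [this]

lemma compSum_succ (f : ℕ → R) (m j : ℕ) :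
    compSum f (m + 1) j = ∑ k ∈ range (j + 1), f k * compSum f m (j - k) := by
  simp only [compSum, mul_sum]
  rw [sum_sigma']
  symm
  refine sum_nbij' (fun p => Fin.cons p.1 p.2) (fun t => ⟨t 0, Fin.tail t⟩) ?_ ?_ ?_ ?_ ?_
  · rintro ⟨k, t⟩ hp
    simp only [mem_sigma, mem_range, mem_comps] at hp ⊢
    rw [Fin.sum_cons, hp.2]
    omega
  · intro t ht
    simp only [mem_comps, Fin.sum_univ_succ] at ht
    simp only [mem_sigma, mem_range, mem_comps, Fin.tail]
    omega
  · rintro ⟨k, t⟩ -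
    simp
  · rintro t -
    exact Fin.cons_self_tail t
  · rintro ⟨k, t⟩ -
    simp [Fin.prod_univ_succ]

lemma compSum_const_mul_pow_mul (a b : R) (f : ℕ → R) (m j : ℕ) :
    compSum (fun k => a * b ^ k * f k) m j = a ^ m * b ^ j * compSum f m j := by
  rw [compSum, compSum, mul_sum]
  refine sum_congr rfl fun t ht => ?_
  rw [prod_mul_distrib, prod_mul_distrib, prod_const, card_univ, Fintype.card_fin,
    prod_pow_eq_pow_sum, mem_comps.mp ht]

variable [PartialOrder R] [IsOrderedRing R]

lemma compSum_nonneg {f : ℕ → R} {m j : ℕ} (hf : ∀ k < j + m, 0 ≤ f k) :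
    0 ≤ compSum f m j :=
  sum_nonneg fun _ ht => prod_nonneg fun i _ => hf _ (lt_of_mem_comps ht i)

lemma compSum_mono {f g : ℕ → R} {m j : ℕ} (hf : ∀ k < j + m, 0 ≤ f k)
    (hfg : ∀ k < j + m, f k ≤ g k) : compSum f m j ≤ compSum g m j :=
  sum_le_sum fun _ ht => prod_le_prod (fun i _ => hf _ (lt_of_mem_comps ht i))
    fun i _ => hfg _ (lt_of_mem_comps ht i)

lemma compSum_le_pow_mul {w : ℕ → R} {K : R} (hK : 0 ≤ K) (hw : ∀ k, 0 ≤ w k) (hw₀ : 1 ≤ w 0)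
    (hconv : ∀ j, ∑ k ∈ range (j + 1), w k * w (j - k) ≤ K * w j) (m j : ℕ) :
    compSum w m j ≤ K ^ m * w j := by
  induction m generalizing j with
  | zero =>
    rw [compSum_zero_left, pow_zero, one_mul]
    split_ifs with hj
    · exact hj ▸ hw₀
    · exact hw j
  | succ m ih =>
    calc compSum w (m + 1) j
        ≤ ∑ k ∈ range (j + 1), w k * (K ^ m * w (j - k)) := by
          rw [compSum_succ]
          exact sum_le_sum fun k _ => mul_le_mul_of_nonneg_left (ih _) (hw k)
      _ = K ^ m * ∑ k ∈ range (j + 1), w k * w (j - k) := by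
          rw [mul_sum]
          exact sum_congr rfl fun k _ => by ring
      _ ≤ K ^ m * (K * w j) := by
          gcongr
          exact hconv j
      _ = K ^ (m + 1) * w j := by ring

end Compositions

section InvSqWeight

noncomputable def invSqWeight (k : ℕ) : ℝ := (((k : ℝ) + 1) ^ 2)⁻¹

lemma invSqWeight_nonneg (k : ℕ) : 0 ≤ invSqWeight k := by unfold invSqWeight; positivity

lemma invSqWeight_zero : invSqWeight 0 = 1 := by simp [invSqWeight]

lemma invSqWeight_le_one (k : ℕ) : invSqWeight k ≤ 1 :=
  inv_le_one_of_one_le₀ (one_le_pow₀ (by simp))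

lemma sum_range_invSqWeight_le_two (j : ℕ) : ∑ k ∈ range j, invSqWeight k ≤ 2 := by
  have h := sum_Ioo_inv_sq_le (α := ℝ) 0 (j + 1)
  rw [← Ico_add_one_left_eq_Ioo, ← sum_Ico_add' (c := 1), ← range_eq_Ico] at h
  simpa [invSqWeight] using h

/-- Since `(k + 1) + (j - k + 1) > j + 1`, one of the two factors is at least `(j + 1) / 2`. -/
lemma invSqWeight_mul_le {k j : ℕ} (hk : k ≤ j) :
    invSqWeight k * invSqWeight (j - k) ≤
      4 * invSqWeight j * (invSqWeight k + invSqWeight (j - k)) := by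
  have hsum : ((k : ℝ) + 1) + ((j - k : ℕ) + 1) = (j + 1) + 1 := by push_cast [hk]; ring
  simp only [invSqWeight]
  set a : ℝ := (k : ℝ) + 1
  set b : ℝ := ((j - k : ℕ) : ℝ) + 1
  set c : ℝ := (j : ℝ) + 1
  have ha : 0 < a := by positivity
  have hb : 0 < b := by positivity
  have hc : 0 < c := by positivity
  have hkey : c ^ 2 ≤ 4 * (a ^ 2 + b ^ 2) := by nlinarith [sq_nonneg (a - b)]
  rw [← sub_nonneg]
  have hexpand : 4 * (c ^ 2)⁻¹ * ((a ^ 2)⁻¹ + (b ^ 2)⁻¹) - (a ^ 2)⁻¹ * (b ^ 2)⁻¹ =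
      (4 * (a ^ 2 + b ^ 2) - c ^ 2) / (a ^ 2 * b ^ 2 * c ^ 2) := by
    field_simp
    ring
  rw [hexpand]
  exact div_nonneg (by linarith) (by positivity)

lemma sum_invSqWeight_conv_le (j : ℕ) :
    ∑ k ∈ range (j + 1), invSqWeight k * invSqWeight (j - k) ≤ 16 * invSqWeight j := by
  have hreflect : ∑ k ∈ range (j + 1), invSqWeight (j - k) = ∑ k ∈ range (j + 1), invSqWeight k :=
    sum_range_reflect invSqWeight (j + 1)
  calc ∑ k ∈ range (j + 1), invSqWeight k * invSqWeight (j - k)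
      ≤ ∑ k ∈ range (j + 1), 4 * invSqWeight j * (invSqWeight k + invSqWeight (j - k)) :=
        sum_le_sum fun k hk => invSqWeight_mul_le (Nat.lt_succ_iff.mp (mem_range.mp hk))
    _ = 4 * invSqWeight j * (2 * ∑ k ∈ range (j + 1), invSqWeight k) := by
        rw [← mul_sum, sum_add_distrib, hreflect, two_mul]
    _ ≤ 4 * invSqWeight j * (2 * 2) := by
        have := invSqWeight_nonneg j
        gcongr
        exact sum_range_invSqWeight_le_two _
    _ = 16 * invSqWeight j := by ring

lemma invSqWeight_le_four_pow_mul {j n : ℕ} (h : j ≤ n) :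
    invSqWeight j ≤ 4 ^ (n - j) * invSqWeight n := by
  have hnat : n + 1 ≤ 2 ^ (n - j) * (j + 1) := by
    obtain ⟨d, rfl⟩ := Nat.exists_eq_add_of_le h
    rw [Nat.add_sub_cancel_left]
    nlinarith [Nat.lt_two_pow_self (n := d)]
  have hreal : (n : ℝ) + 1 ≤ 2 ^ (n - j) * ((j : ℝ) + 1) := by exact_mod_cast hnat
  simp only [invSqWeight]
  field_simp
  calc ((n : ℝ) + 1) ^ 2 ≤ (2 ^ (n - j) * ((j : ℝ) + 1)) ^ 2 := by gcongr
    _ = ((j : ℝ) + 1) ^ 2 * 4 ^ (n - j) := by rw [mul_pow, ← pow_mul, pow_mul', mul_comm]; norm_num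

lemma compSum_weighted_le {D M : ℝ} (hD : 0 ≤ D) (hM : 4 ≤ M) {m j n : ℕ} (h : j + m ≤ n) :
    compSum (fun k => D * M ^ k * invSqWeight k) m j ≤
      (64 * D / M) ^ m * M ^ n * invSqWeight n := by
  obtain ⟨d, rfl⟩ := Nat.exists_eq_add_of_le (le_of_add_le_left h)
  have hM₀ : 0 < M := by linarith
  have hw := invSqWeight_nonneg (j + d)
  have hsum : compSum invSqWeight m j ≤ 16 ^ m * (4 ^ d * invSqWeight (j + d)) := by
    refine (compSum_le_pow_mul (by norm_num) invSqWeight_nonneg invSqWeight_zero.ge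
      sum_invSqWeight_conv_le m j).trans ?_
    gcongr
    simpa using invSqWeight_le_four_pow_mul (Nat.le_add_right j d)
  calc compSum (fun k => D * M ^ k * invSqWeight k) m j
      = D ^ m * M ^ j * compSum invSqWeight m j := compSum_const_mul_pow_mul D M _ m j
    _ ≤ D ^ m * M ^ j * (16 ^ m * (4 ^ d * invSqWeight (j + d))) := by gcongr
    _ = (16 * D) ^ m * (4 / M) ^ d * M ^ (j + d) * invSqWeight (j + d) := by
        rw [div_pow, mul_pow, pow_add]
        field_simp
    _ ≤ (16 * D) ^ m * (4 / M) ^ m * M ^ (j + d) * invSqWeight (j + d) := by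
        gcongr (16 * D) ^ m * ?_ * _ * _
        exact pow_le_pow_of_le_one (by positivity) (div_le_one_of_le₀ hM hM₀.le) (by omega)
    _ = (64 * D / M) ^ m * M ^ (j + d) * invSqWeight (j + d) := by
        rw [← mul_pow]
        ring_nf

end InvSqWeight

def borelRHS (B C : ℝ) (f : ℕ → ℝ) (n : ℕ) : ℝ :=
  ∑ m ∈ range (n + 1), C * B ^ m *
    (compSum f m (n - m) + if m + 1 ≤ n then compSum f m (n - m - 1) else 0)

section BorelRHS

variable {B C : ℝ}

lemma borelRHS_nonneg (hB : 0 ≤ B) (hC : 0 ≤ C) {f : ℕ → ℝ} {n : ℕ} (hf : ∀ k < n, 0 ≤ f k) :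
    0 ≤ borelRHS B C f n := by
  refine sum_nonneg fun m hm => mul_nonneg (by positivity) (add_nonneg ?_ ?_)
  all_goals rw [mem_range] at hm
  · exact compSum_nonneg fun k hk => hf k (by omega)
  · split_ifs
    · exact compSum_nonneg fun k hk => hf k (by omega)
    · exact le_rfl

lemma borelRHS_mono (hB : 0 ≤ B) (hC : 0 ≤ C) {f g : ℕ → ℝ} {n : ℕ}
    (hf : ∀ k < n, 0 ≤ f k) (hfg : ∀ k < n, f k ≤ g k) :
    borelRHS B C f n ≤ borelRHS B C g n := by
  refine sum_le_sum fun m hm => mul_le_mul_of_nonneg_left (add_le_add ?_ ?_) (by positivity)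
  all_goals rw [mem_range] at hm
  · exact compSum_mono (fun k hk => hf k (by omega)) (fun k hk => hfg k (by omega))
  · split_ifs
    · exact compSum_mono (fun k hk => hf k (by omega)) (fun k hk => hfg k (by omega))
    · exact le_rfl

lemma borelRHS_weighted_le (hB : 0 ≤ B) (hC : 0 ≤ C) {M : ℝ} (hM : 4 ≤ M)
    (hBCM : 512 * B * C ≤ M) (n : ℕ) :
    borelRHS B C (fun k => 4 * C * M ^ k * invSqWeight k) n ≤ 4 * C * M ^ n * invSqWeight n := by
  set g : ℕ → ℝ := fun k => 4 * C * M ^ k * invSqWeight k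
  set Y : ℕ → ℝ := fun m => (64 * (4 * C) / M) ^ m * M ^ n * invSqWeight n
  have hM₀ : 0 < M := by linarith
  have hY : ∀ m, 0 ≤ Y m := fun m => by have := invSqWeight_nonneg n; positivity
  have hratio : 64 * (4 * C) / M * B ≤ 1 / 2 := by
    rw [div_mul_eq_mul_div, div_le_iff₀ hM₀]
    linarith
  have hterm : ∀ m ∈ range (n + 1), C * B ^ m *
      (compSum g m (n - m) + if m + 1 ≤ n then compSum g m (n - m - 1) else 0) ≤
        2 * C * M ^ n * invSqWeight n * (1 / 2) ^ m := by
    intro m hm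
    rw [mem_range] at hm
    have h4C : 0 ≤ 4 * C := by positivity
    calc C * B ^ m * (compSum g m (n - m) + if m + 1 ≤ n then compSum g m (n - m - 1) else 0)
        ≤ C * B ^ m * (Y m + Y m) := by
          gcongr
          · exact compSum_weighted_le h4C hM (by omega)
          · split_ifs
            · exact compSum_weighted_le h4C hM (by omega)
            · exact hY m
      _ = 2 * C * M ^ n * invSqWeight n * (64 * (4 * C) / M * B) ^ m := by
          simp only [Y, mul_pow]
          ring
      _ ≤ 2 * C * M ^ n * invSqWeight n * (1 / 2) ^ m := by
          have := invSqWeight_nonneg n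
          gcongr
  calc borelRHS B C g n
      ≤ ∑ m ∈ range (n + 1), 2 * C * M ^ n * invSqWeight n * (1 / 2) ^ m := sum_le_sum hterm
    _ = 2 * C * M ^ n * invSqWeight n * ∑ m ∈ range (n + 1), (1 / 2 : ℝ) ^ m := by
        rw [mul_sum]
    _ ≤ 2 * C * M ^ n * invSqWeight n * 2 := by
        have := invSqWeight_nonneg n
        gcongr
        exact sum_geometric_two_le _
    _ = 4 * C * M ^ n * invSqWeight n := by ring

end BorelRHS

/-- **Exponential bound for the Borel-plane recursion sequence.** If
`M_n = Σ_{m=0}^{n} C·Bᵐ·( Σ_{i₁+⋯+i_m=n−m} M_{i₁}⋯M_{i_m} + Σ_{i₁+⋯+i_m=n−m−1} M_{i₁}⋯M_{i_m} )`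
(sums over compositions of a negative integer being `0`), then `M_n ≤ D·Mⁿ` for some
constants `D, M > 0`. -/
theorem borel_recursion_exponential_bound
    (B C : ℝ) (hB : 0 < B) (hC : 0 < C)
    (Mseq : ℕ → ℝ)
    (hrec : ∀ n : ℕ, Mseq n =
      ∑ m ∈ Finset.range (n + 1), C * B ^ m *
        ((∑ t ∈ comps m (n - m), ∏ j, Mseq (t j)) +
          (if m + 1 ≤ n then ∑ t ∈ comps m (n - m - 1), ∏ j, Mseq (t j) else 0))) :
    ∃ D > (0 : ℝ), ∃ M > (0 : ℝ), ∀ n : ℕ, Mseq n ≤ D * M ^ n := by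
  have hrec' : ∀ n, Mseq n = borelRHS B C Mseq n := hrec
  set M : ℝ := 4 + 512 * B * C
  have hM : 4 ≤ M := le_add_of_nonneg_right (by positivity)
  have hBCM : 512 * B * C ≤ M := by linarith
  have hnonneg : ∀ n, 0 ≤ Mseq n := fun n => Nat.strong_induction_on n fun n ih =>
    (hrec' n).symm ▸ borelRHS_nonneg hB.le hC.le ih
  have hweighted : ∀ n, Mseq n ≤ 4 * C * M ^ n * invSqWeight n := fun n =>
    Nat.strong_induction_on n fun n ih => (hrec' n).symm ▸
      (borelRHS_mono hB.le hC.le (fun k _ => hnonneg k) ih).trans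
        (borelRHS_weighted_le hB.le hC.le hM hBCM n)
  refine ⟨4 * C, by positivity, M, by linarith, fun n => (hweighted n).trans ?_⟩
  exact mul_le_of_le_one_right (by positivity) (invSqWeight_le_one n)
end
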